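/- arXiv:2302.08344 — 3 statements merged into one kernel-verified Lean document; each statement's English description precedes it below -/
import Mathlib

section
/- Under the biased voter rule on a d-regular graph with conductance at least φ, for 0 < q_1 < q_0 ≤ 1 there exists a constant γ = γ(q_0,q_1,φ) ∈ (0,1) such that at any time t, P(Δ(t) ≤ ((q_0−q_1)/2)·φ·min(A_t, B_t)) ≤ 2·exp(−γ·min(A_t,B_t)). -/
/-!
Write `r = E(A,B)/d`, so that `E Δ = (q₀ - q₁) r` and `r ≥ φ · min(|A|, |B|)`. The threshold
`(q₀ - q₁)/2 · φ · min(|A|, |B|)` is then at most half the mean, and a Chernoff bound on the lower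
tail of `Δ` finishes the proof: a `{0,1}`-valued variable with success probability `p` has
`E e^{sW} = 1 + (e^s - 1) p ≤ exp ((e^s - 1) p)`, and `e^x - 1 ≤ x + x²` for `|x| ≤ 1` turns the
exponent into a quadratic in `t`, minimised at `t = (q₀ - q₁) / (4 (q₀ + q₁))`.
-/

open MeasureTheory ProbabilityTheory Finset Real

section ZeroOne

variable {Ω : Type*} {W : Ω → ℝ}

lemma exp_mul_of_zero_or_one (h01 : ∀ ω, W ω = 0 ∨ W ω = 1) (s : ℝ) (ω : Ω) :
    exp (s * W ω) = 1 + (exp s - 1) * W ω := by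
  rcases h01 ω with h | h <;> simp [h]

lemma eq_indicator_of_zero_or_one (h01 : ∀ ω, W ω = 0 ∨ W ω = 1) :
    W = {ω | W ω = 1}.indicator 1 := by
  funext ω
  rcases h01 ω with h | h <;> simp [h]

variable [MeasurableSpace Ω] {μ : Measure Ω} [IsFiniteMeasure μ]

lemma integrable_of_zero_or_one (hW : Measurable W) (h01 : ∀ ω, W ω = 0 ∨ W ω = 1) :
    Integrable W μ := by
  rw [eq_indicator_of_zero_or_one h01]
  exact (integrable_const 1).indicator (hW (measurableSet_singleton 1))

lemma integrable_exp_mul_of_zero_or_one (hW : Measurable W) (h01 : ∀ ω, W ω = 0 ∨ W ω = 1)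
    (s : ℝ) : Integrable (fun ω ↦ exp (s * W ω)) μ := by
  simp_rw [exp_mul_of_zero_or_one h01 s]
  exact (integrable_const 1).add ((integrable_of_zero_or_one hW h01).const_mul _)

lemma mgf_of_zero_or_one [IsProbabilityMeasure μ] (hW : Measurable W)
    (h01 : ∀ ω, W ω = 0 ∨ W ω = 1) (s : ℝ) :
    mgf W μ s = 1 + (exp s - 1) * μ.real {ω | W ω = 1} := by
  have hmean : ∫ ω, W ω ∂μ = μ.real {ω | W ω = 1} := by
    conv_lhs => rw [eq_indicator_of_zero_or_one h01]
    exact integral_indicator_one (hW (measurableSet_singleton 1))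
  rw [mgf, funext (exp_mul_of_zero_or_one h01 s), integral_add (integrable_const 1)
    ((integrable_of_zero_or_one hW h01).const_mul _), integral_const_mul, hmean,
    integral_const, probReal_univ, one_smul]

lemma mgf_le_exp_of_zero_or_one [IsProbabilityMeasure μ] (hW : Measurable W)
    (h01 : ∀ ω, W ω = 0 ∨ W ω = 1) (s : ℝ) :
    mgf W μ s ≤ exp ((exp s - 1) * μ.real {ω | W ω = 1}) := by
  rw [mgf_of_zero_or_one hW h01, add_comm]
  exact add_one_le_exp _

end ZeroOne

lemma Finset.sum_ite_mem_compl {ι M : Type*} [Fintype ι] [DecidableEq ι] [AddCommMonoid M]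
    (B : Finset ι) (f g : ι → M) :
    ∑ i, (if i ∈ B then f i else g i) = ∑ i ∈ B, f i + ∑ i ∈ Bᶜ, g i := by
  simpa [Finset.piecewise, compl_eq_univ_sdiff] using sum_piecewise univ B f g

lemma exp_sub_one_le_add_sq {x : ℝ} (hx : |x| ≤ 1) : exp x - 1 ≤ x + x ^ 2 := by
  linarith [(abs_le.1 (abs_exp_sub_one_sub_id_le hx)).2]

lemma chernoff_exponent_le {q₀ q₁ r t : ℝ} (hq₁ : 0 ≤ q₁) (hq : q₁ < q₀) (hr : 0 ≤ r)
    (ht : t = (q₀ - q₁) / (4 * (q₀ + q₁))) :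
    t * ((q₀ - q₁) / 2 * r) + (exp (-t) - 1) * (q₀ * r) + (exp t - 1) * (q₁ * r)
      ≤ -((q₀ - q₁) ^ 2 / (16 * (q₀ + q₁)) * r) := by
  have hq₀ : 0 ≤ q₀ := by linarith
  have hσ : 0 < q₀ + q₁ := by linarith
  have ht₀ : 0 ≤ t := by rw [ht]; exact div_nonneg (by linarith) (by positivity)
  have ht₁ : t ≤ 1 := by rw [ht, div_le_one (by positivity)]; linarith
  have hup := exp_sub_one_le_add_sq (x := t) (by rw [abs_of_nonneg ht₀]; exact ht₁)
  have hdown := exp_sub_one_le_add_sq (x := -t) (by rw [abs_neg, abs_of_nonneg ht₀]; exact ht₁)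
  have hquad : -(q₀ - q₁) / 2 * t + (q₀ + q₁) * t ^ 2 = -((q₀ - q₁) ^ 2 / (16 * (q₀ + q₁))) := by
    rw [ht]; field_simp; ring
  calc t * ((q₀ - q₁) / 2 * r) + (exp (-t) - 1) * (q₀ * r) + (exp t - 1) * (q₁ * r)
      ≤ t * ((q₀ - q₁) / 2 * r) + (-t + (-t) ^ 2) * (q₀ * r) + (t + t ^ 2) * (q₁ * r) := by
        gcongr
    _ = (-(q₀ - q₁) / 2 * t + (q₀ + q₁) * t ^ 2) * r := by ring
    _ = _ := by rw [hquad, neg_mul]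

section Chernoff

variable {Ω ι : Type*} [MeasurableSpace Ω] {μ : Measure Ω} [IsProbabilityMeasure μ] [Fintype ι]
  {Z : ι → Ω → ℝ}

theorem measure_sum_mul_le_le_of_zero_or_one (hZ : ∀ i, Measurable (Z i))
    (h_indep : iIndepFun Z μ) (h01 : ∀ i ω, Z i ω = 0 ∨ Z i ω = 1) (c : ι → ℝ) (a : ℝ)
    {t : ℝ} (ht : 0 ≤ t) :
    μ.real {ω | ∑ i, c i * Z i ω ≤ a} ≤
      exp (t * a + ∑ i, (exp (-(c i * t)) - 1) * μ.real {ω | Z i ω = 1}) := by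
  set X : ι → Ω → ℝ := fun i ω ↦ c i * Z i ω
  have hX : ∀ i, Measurable (X i) := fun i ↦ (hZ i).const_mul (c i)
  have hX_indep : iIndepFun X μ := h_indep.comp (fun i x ↦ c i * x) fun i ↦ measurable_const_mul _
  have hX_int : ∀ i ∈ univ, Integrable (fun ω ↦ exp (-t * X i ω)) μ := fun i _ ↦ by
    simpa only [X, ← mul_assoc] using integrable_exp_mul_of_zero_or_one (hZ i) (h01 i) (-t * c i)
  have hsum : {ω | ∑ i, c i * Z i ω ≤ a} = {ω | (∑ i, X i) ω ≤ a} := by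
    simp only [Finset.sum_apply, X]
  calc μ.real {ω | ∑ i, c i * Z i ω ≤ a}
      ≤ exp (-(-t) * a) * ∏ i, mgf (X i) μ (-t) := by
        rw [hsum, ← hX_indep.mgf_sum hX]
        exact measure_le_le_exp_mul_mgf a (neg_nonpos.2 ht)
          (hX_indep.integrable_exp_mul_sum hX hX_int)
    _ ≤ exp (t * a) * ∏ i, exp ((exp (-(c i * t)) - 1) * μ.real {ω | Z i ω = 1}) := by
        rw [neg_neg]
        gcongr with i
        · exact fun i _ ↦ mgf_nonneg
        · rw [mgf_const_mul, mul_neg]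
          exact mgf_le_exp_of_zero_or_one (hZ i) (h01 i) _
    _ = _ := by rw [← exp_sum, ← exp_add]

theorem measure_sum_sub_sum_compl_le_le_of_zero_or_one [DecidableEq ι]
    (hZ : ∀ i, Measurable (Z i)) (h_indep : iIndepFun Z μ) (h01 : ∀ i ω, Z i ω = 0 ∨ Z i ω = 1)
    (B : Finset ι) (a : ℝ) {t : ℝ} (ht : 0 ≤ t) :
    μ.real {ω | ∑ i ∈ B, Z i ω - ∑ i ∈ Bᶜ, Z i ω ≤ a} ≤
      exp (t * a + (exp (-t) - 1) * ∑ i ∈ B, μ.real {ω | Z i ω = 1}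
        + (exp t - 1) * ∑ i ∈ Bᶜ, μ.real {ω | Z i ω = 1}) := by
  have key := measure_sum_mul_le_le_of_zero_or_one hZ h_indep h01
    (fun i ↦ if i ∈ B then 1 else -1) a ht
  simp only [ite_mul, one_mul, neg_one_mul, neg_neg, apply_ite, ite_sub, sum_ite_mem_compl,
    sum_neg_distrib, ← sub_eq_add_neg] at key
  rwa [← mul_sum, ← mul_sum, ← add_assoc] at key

theorem measure_sum_sub_sum_compl_le_half_mean_le [DecidableEq ι] (hZ : ∀ i, Measurable (Z i))
    (h_indep : iIndepFun Z μ) (h01 : ∀ i ω, Z i ω = 0 ∨ Z i ω = 1) (B : Finset ι)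
    {q₀ q₁ r : ℝ} (hq₁ : 0 ≤ q₁) (hq : q₁ < q₀) (hr : 0 ≤ r)
    (hB : ∑ i ∈ B, μ.real {ω | Z i ω = 1} = q₀ * r)
    (hBc : ∑ i ∈ Bᶜ, μ.real {ω | Z i ω = 1} = q₁ * r) :
    μ.real {ω | ∑ i ∈ B, Z i ω - ∑ i ∈ Bᶜ, Z i ω ≤ (q₀ - q₁) / 2 * r} ≤
      exp (-((q₀ - q₁) ^ 2 / (16 * (q₀ + q₁)) * r)) := by
  set t := (q₀ - q₁) / (4 * (q₀ + q₁))
  calc μ.real {ω | ∑ i ∈ B, Z i ω - ∑ i ∈ Bᶜ, Z i ω ≤ (q₀ - q₁) / 2 * r}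
      ≤ exp (t * ((q₀ - q₁) / 2 * r) + (exp (-t) - 1) * (q₀ * r) + (exp t - 1) * (q₁ * r)) := by
        rw [← hB, ← hBc]
        exact measure_sum_sub_sum_compl_le_le_of_zero_or_one hZ h_indep h01 B _
          (div_nonneg (by linarith) (by linarith))
    _ ≤ _ := exp_le_exp.2 (chernoff_exponent_le hq₁ hq hr rfl)

end Chernoff

lemma sum_eq_mul_div_of_eq_mul_div {ι : Type*} {s : Finset ι} {p : ι → ℝ} {f : ι → ℕ} {q : ℝ}
    {d E : ℕ} (hp : ∀ i ∈ s, p i = q * f i / d) (hE : ∑ i ∈ s, f i = E) :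
    ∑ i ∈ s, p i = q * (E / d) := by
  rw [sum_congr rfl hp, ← sum_div, ← mul_sum, mul_div_assoc, ← Nat.cast_sum, hE]

theorem stmt_6_general (q0 q1 φ : ℝ) (hq1 : 0 < q1) (hq : q1 < q0) (hφ : 0 < φ) :
    ∃ γ ∈ Set.Ioo (0:ℝ) 1,
      ∀ (Ω : Type) (_ : MeasurableSpace Ω) (μ : Measure Ω), IsProbabilityMeasure μ →
      ∀ (V : Type) (_ : Fintype V) (_ : DecidableEq V) (A B : Finset V),
      Disjoint A B → A ∪ B = Finset.univ →
      ∀ (d : ℕ), 0 < d →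
      ∀ (dA dB : V → ℕ), (∀ v, dA v ≤ d) → (∀ v, dB v ≤ d) →
      ∀ (EAB : ℕ), (∑ v ∈ B, dA v = EAB) → (∑ v ∈ A, dB v = EAB) →
      φ * d * min (A.card : ℝ) (B.card : ℝ) ≤ (EAB : ℝ) →
      ∀ (Z : V → Ω → ℝ), (∀ v, Measurable (Z v)) →
      iIndepFun Z μ →
      (∀ v ∈ B, (∀ ω, Z v ω = 0 ∨ Z v ω = 1) ∧
        (μ {ω | Z v ω = 1}).toReal = q0 * (dA v : ℝ) / d) →
      (∀ v ∈ A, (∀ ω, Z v ω = 0 ∨ Z v ω = 1) ∧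
        (μ {ω | Z v ω = 1}).toReal = q1 * (dB v : ℝ) / d) →
      (μ {ω | (∑ v ∈ B, Z v ω) - (∑ v ∈ A, Z v ω)
          ≤ (q0 - q1) / 2 * φ * min (A.card : ℝ) (B.card : ℝ)}).toReal
        ≤ 2 * Real.exp (-γ * min (A.card : ℝ) (B.card : ℝ)) := by
  set κ := (q0 - q1) ^ 2 / (16 * (q0 + q1))
  have hκ : 0 < κ := div_pos (pow_pos (sub_pos.2 hq) 2) (by linarith)
  refine ⟨min (κ * φ) (1 / 2), ⟨lt_min (by positivity) (by norm_num),
    (min_le_right _ _).trans_lt (by norm_num)⟩, ?_⟩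
  intro Ω _ μ _ V _ _ A B hAB hAB_univ d hd dA dB _ _ EAB hEB hEA hφE Z hZ h_indep hZB hZA
  obtain rfl : A = Bᶜ := IsCompl.eq_compl ⟨hAB, codisjoint_iff.2 hAB_univ⟩
  set m := min (#Bᶜ : ℝ) #B
  set r := (EAB : ℝ) / d
  have hm : 0 ≤ m := le_min (Nat.cast_nonneg _) (Nat.cast_nonneg _)
  have hφr : φ * m ≤ r := by rw [le_div_iff₀ (by positivity)]; linarith
  have hthreshold : (q0 - q1) / 2 * φ * m ≤ (q0 - q1) / 2 * r := by
    rw [mul_assoc]; exact mul_le_mul_of_nonneg_left hφr (by linarith)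
  have h01 : ∀ v ω, Z v ω = 0 ∨ Z v ω = 1 := fun v ↦
    if hv : v ∈ B then (hZB v hv).1 else (hZA v (mem_compl.2 hv)).1
  calc μ.real {ω | ∑ v ∈ B, Z v ω - ∑ v ∈ Bᶜ, Z v ω ≤ (q0 - q1) / 2 * φ * m}
      ≤ μ.real {ω | ∑ v ∈ B, Z v ω - ∑ v ∈ Bᶜ, Z v ω ≤ (q0 - q1) / 2 * r} :=
        measureReal_mono (Set.ofPred_subset_ofPred.2 fun _ hω ↦ hω.trans hthreshold)
    _ ≤ exp (-(κ * r)) :=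
        measure_sum_sub_sum_compl_le_half_mean_le hZ h_indep h01 B hq1.le hq (by positivity)
          (sum_eq_mul_div_of_eq_mul_div (fun v hv ↦ (hZB v hv).2) hEB)
          (sum_eq_mul_div_of_eq_mul_div (fun v hv ↦ (hZA v hv).2) hEA)
    _ ≤ exp (-min (κ * φ) (1 / 2) * m) := by
        rw [exp_le_exp, neg_mul, neg_le_neg_iff]
        calc min (κ * φ) (1 / 2) * m ≤ κ * φ * m := by gcongr; exact min_le_left _ _
          _ ≤ κ * r := by rw [mul_assoc]; gcongr
    _ ≤ 2 * exp (-min (κ * φ) (1 / 2) * m) := le_mul_of_one_le_left (exp_pos _).le one_le_two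

/-- Biased voter rule on a `d`-regular graph with conductance at least `φ`:
for `0 < q1 < q0 ≤ 1` there exists a constant `γ = γ(q0,q1,φ) ∈ (0,1)` such
that at any step, `P(Δ ≤ ((q0−q1)/2)·φ·min(A,B)) ≤ 2·exp(−γ·min(A,B))`.
Here `Δ = Σ_{v∈B} Z v − Σ_{v∈A} Z v`, where the `Z v` are independent Bernoulli
indicators with means `q0·d_v^A/d` for `v ∈ B` and `q1·d_v^B/d` for `v ∈ A`,
and the conductance bound gives `E(A,B) = Σ_{v∈B} d_v^A = Σ_{v∈A} d_v^B ≥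
φ·d·min(|A|,|B|)`. -/
theorem stmt_6 (q0 q1 φ : ℝ) (hq1 : 0 < q1) (hq : q1 < q0) (hq0 : q0 ≤ 1) (hφ : 0 < φ) :
    ∃ γ ∈ Set.Ioo (0:ℝ) 1,
      ∀ (Ω : Type) (_ : MeasurableSpace Ω) (μ : Measure Ω), IsProbabilityMeasure μ →
      ∀ (V : Type) (_ : Fintype V) (_ : DecidableEq V) (A B : Finset V),
      Disjoint A B → A ∪ B = Finset.univ →
      ∀ (d : ℕ), 0 < d →
      ∀ (dA dB : V → ℕ), (∀ v, dA v ≤ d) → (∀ v, dB v ≤ d) →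
      ∀ (EAB : ℕ), (∑ v ∈ B, dA v = EAB) → (∑ v ∈ A, dB v = EAB) →
      φ * d * min (A.card : ℝ) (B.card : ℝ) ≤ (EAB : ℝ) →
      ∀ (Z : V → Ω → ℝ), (∀ v, Measurable (Z v)) →
      iIndepFun Z μ →
      (∀ v ∈ B, (∀ ω, Z v ω = 0 ∨ Z v ω = 1) ∧
        (μ {ω | Z v ω = 1}).toReal = q0 * (dA v : ℝ) / d) →
      (∀ v ∈ A, (∀ ω, Z v ω = 0 ∨ Z v ω = 1) ∧
        (μ {ω | Z v ω = 1}).toReal = q1 * (dB v : ℝ) / d) →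
      (μ {ω | (∑ v ∈ B, Z v ω) - (∑ v ∈ A, Z v ω)
          ≤ (q0 - q1) / 2 * φ * min (A.card : ℝ) (B.card : ℝ)}).toReal
        ≤ 2 * Real.exp (-γ * min (A.card : ℝ) (B.card : ℝ)) :=
  stmt_6_general q0 q1 φ hq1 hq hφ
end

section
/- For the biased 2-choices rule on a d-regular graph G on n vertices with second-largest eigenvalue modulus λ of the scaled adjacency matrix, the expected drift satisfies E[Δ(t)] ≥ B_t·(q_1(1−λ²)·A_t/n − q_1²/(q_0+q_1)). -/
open Finset

/-- Biased 2-choices rule on a `d`-regular graph on `n` vertices with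
second-largest eigenvalue modulus `λ` of the scaled adjacency matrix:
`E[Δ(t)] ≥ B_t·(q1(1−λ²)·A_t/n − q1²/(q0+q1))`. Here
`E[Δ(t)] = q0·Σ_{v∈B}(d_v^A/d)² − q1·Σ_{v∈A}(d_v^B/d)²`, and we assume the
expander mixing-type inequality with `θ = E(A,B)/(d·B) ∈ [0,1]`. -/
theorem stmt_11 {V : Type*} [Fintype V] [DecidableEq V]
    (A B : Finset V) (hdisj : Disjoint A B) (hunion : A ∪ B = Finset.univ)
    (hB : B.Nonempty) (n : ℕ) (hn : Fintype.card V = n)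
    (d : ℕ) (hd : 0 < d) (dA dB : V → ℕ) (hdA : ∀ v, dA v ≤ d) (hdB : ∀ v, dB v ≤ d)
    (q0 q1 lam : ℝ) (hq1 : 0 < q1) (hq : q1 < q0) (hq0 : q0 ≤ 1)
    (θ : ℝ) (hθ : θ = (∑ v ∈ B, (dA v : ℝ)) / (d * B.card))
    (hθ01 : θ ∈ Set.Icc (0:ℝ) 1)
    (hmixing : (B.card : ℝ) * ((1 - lam ^ 2) * A.card / n - 2 * θ * (1 - θ))
      ≤ (∑ v ∈ B, ((dA v : ℝ) / d) ^ 2) - ∑ v ∈ A, ((dB v : ℝ) / d) ^ 2) :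
    (B.card : ℝ) * (q1 * (1 - lam ^ 2) * A.card / n - q1 ^ 2 / (q0 + q1))
      ≤ q0 * (∑ v ∈ B, ((dA v : ℝ) / d) ^ 2)
        - q1 * ∑ v ∈ A, ((dB v : ℝ) / d) ^ 2 := by
  have hBc : (0:ℝ) < B.card := by exact_mod_cast Finset.card_pos.mpr hB
  have hdr : (0:ℝ) < d := by exact_mod_cast hd
  -- Jensen / Cauchy-Schwarz: B.card * θ^2 ≤ ∑_{v∈B} (dA v / d)^2
  have hCS : (∑ v ∈ B, (dA v : ℝ) / d) ^ 2
      ≤ (B.card : ℝ) * ∑ v ∈ B, ((dA v : ℝ) / d) ^ 2 := by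
    exact_mod_cast sq_sum_le_card_mul_sum_sq (s := B) (f := fun v => (dA v : ℝ) / d)
  have hsum : (∑ v ∈ B, (dA v : ℝ) / d) = θ * B.card := by
    rw [hθ, ← Finset.sum_div]
    field_simp
  have hJ : (B.card : ℝ) * θ ^ 2 ≤ ∑ v ∈ B, ((dA v : ℝ) / d) ^ 2 := by
    rw [hsum] at hCS
    have := mul_le_mul_of_nonneg_left hCS (le_of_lt (inv_pos.mpr hBc))
    calc (B.card : ℝ) * θ ^ 2 = (B.card:ℝ)⁻¹ * ((θ * B.card) ^ 2) := by
          field_simp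
      _ ≤ (B.card:ℝ)⁻¹ * ((B.card : ℝ) * ∑ v ∈ B, ((dA v : ℝ) / d) ^ 2) := this
      _ = ∑ v ∈ B, ((dA v : ℝ) / d) ^ 2 := by field_simp
  set S := ∑ v ∈ B, ((dA v : ℝ) / d) ^ 2
  set T := ∑ v ∈ A, ((dB v : ℝ) / d) ^ 2
  have hq01 : (0:ℝ) < q0 + q1 := by linarith
  have hc : q1 ^ 2 / (q0 + q1) * (q0 + q1) = q1 ^ 2 := by field_simp
  have hkey : -(q1 ^ 2 / (q0 + q1)) ≤ (q0 - q1) * θ ^ 2 - q1 * (2 * θ * (1 - θ)) := by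
    rw [neg_le, ← sub_nonneg] at *
    nlinarith [sq_nonneg ((q0 + q1) * θ - q1), hc, hq01]
  have h1 := mul_le_mul_of_nonneg_left hmixing hq1.le
  have h2 := mul_le_mul_of_nonneg_left hJ (by linarith : (0:ℝ) ≤ q0 - q1)
  have h3 := mul_le_mul_of_nonneg_left hkey hBc.le
  ring_nf at h1 h2 h3 ⊢
  linarith [h1, h2, h3]
end

section
/- Under the biased 2-choices rule, if ε'(t) = ε' with ε' ≥ 2λ_n², B_t ≥ nγ and n·ε'² ≥ log n, and E[Δ(t) | ε'(t) = ε'] ≥ (B_t q_1/2)c·ε', and Δ(t) is a sum of at most n independent random variables each ranging over an interval of length 1, then P(Δ(t) ≤ (B_t q_1/4)c·ε' | ε'(t) = ε') ≤ 2/n^α where α = γ²q_1²c²/8. -/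
/-!
Each summand ranges over an interval of length 1, so by Hoeffding's lemma `μ[Y l] - Y l` is
sub-Gaussian with parameter `1/4`; by independence `μ[Δ] - Δ` is sub-Gaussian with parameter
`n/4`, and the Chernoff bound gives `P(Δ ≤ μ[Δ] - η) ≤ exp(-2η²/n)`. The threshold
`η = (B_t q₁/4) c ε'` is half the assumed lower bound on `μ[Δ]`, so it lies below `μ[Δ] - η`,
and `2η²/n ≥ α log n` because `B_t ≥ nγ` and `n ε'² ≥ log n`.
-/

open MeasureTheory ProbabilityTheory Finset Real NNReal

namespace ProbabilityTheory

lemma HasSubgaussianMGF.mono {Ω : Type*} [MeasurableSpace Ω] {μ : Measure Ω} {X : Ω → ℝ}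
    {c c' : ℝ≥0} (h : HasSubgaussianMGF X c μ) (hc : c ≤ c') : HasSubgaussianMGF X c' μ where
  integrable_exp_mul := h.integrable_exp_mul
  mgf_le t := (h.mgf_le t).trans (by gcongr)

section UnitIntervalSummands

variable {Ω ι : Type*} [MeasurableSpace Ω] {μ : Measure Ω} [IsProbabilityMeasure μ]
  [Fintype ι] {Y : ι → Ω → ℝ} {a : ι → ℝ}

lemma hasSubgaussianMGF_integral_sub_of_mem_Icc_add_one {X : Ω → ℝ} {b : ℝ}
    (hX : AEMeasurable X μ) (hb : ∀ᵐ ω ∂μ, X ω ∈ Set.Icc b (b + 1)) :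
    HasSubgaussianMGF (fun ω ↦ μ[X] - X ω) (1 / 4) μ := by
  have h := (hasSubgaussianMGF_of_mem_Icc hX hb).neg
  convert h using 1
  · ext ω; simp only [Pi.neg_apply, neg_sub]
  · norm_num [nnnorm_one]

lemma measureReal_sum_le_integral_sub_le (hmeas : ∀ l, AEMeasurable (Y l) μ)
    (hindep : iIndepFun Y μ) (hbdd : ∀ l, ∀ᵐ ω ∂μ, Y l ω ∈ Set.Icc (a l) (a l + 1))
    {N : ℕ} (hN : Fintype.card ι ≤ N) {η : ℝ} (hη : 0 ≤ η) :
    μ.real {ω | ∑ l, Y l ω ≤ μ[fun ω ↦ ∑ l, Y l ω] - η} ≤ exp (-2 * η ^ 2 / N) := by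
  have hsum : μ[fun ω ↦ ∑ l, Y l ω] = ∑ l, μ[Y l] :=
    integral_finsetSum _ fun l _ ↦ Integrable.of_mem_Icc _ _ (hmeas l) (hbdd l)
  have hindep' : iIndepFun (fun l ω ↦ μ[Y l] - Y l ω) μ :=
    hindep.comp (fun l x ↦ ∫ ω, Y l ω ∂μ - x)
      fun _ ↦ measurable_const.sub measurable_id
  have hsubG : HasSubgaussianMGF (fun ω ↦ ∑ l, (μ[Y l] - Y l ω)) (N / 4) μ := by
    refine (HasSubgaussianMGF.sum_of_iIndepFun hindep' (s := univ) (c := fun _ ↦ 1 / 4)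
      fun l _ ↦ hasSubgaussianMGF_integral_sub_of_mem_Icc_add_one (hmeas l) (hbdd l)).mono ?_
    rw [sum_const, card_univ, nsmul_eq_mul, mul_one_div]
    gcongr
  have hevent : {ω | ∑ l, Y l ω ≤ μ[fun ω ↦ ∑ l, Y l ω] - η} =
      {ω | η ≤ ∑ l, (μ[Y l] - Y l ω)} := by
    ext ω
    simp only [Set.mem_ofPred_eq, hsum, sum_sub_distrib]
    exact le_sub_comm
  rw [hevent]
  refine (hsubG.measure_ge_le hη).trans_eq ?_
  congr 1
  push_cast
  ring

end UnitIntervalSummands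

end ProbabilityTheory

lemma mul_log_le_hoeffding_exponent {n γ q c ε B : ℝ} (hn : 0 < n) (hγ : 0 ≤ γ)
    (hB : n * γ ≤ B) (hlog : log n ≤ n * ε ^ 2) :
    γ ^ 2 * q ^ 2 * c ^ 2 / 8 * log n ≤ 2 * (B * q / 4 * c * ε) ^ 2 / n := by
  have hB2 : (n * γ) ^ 2 ≤ B ^ 2 := pow_le_pow_left₀ (by positivity) hB 2
  rw [le_div_iff₀ hn]
  calc γ ^ 2 * q ^ 2 * c ^ 2 / 8 * log n * n
      ≤ γ ^ 2 * q ^ 2 * c ^ 2 / 8 * (n * ε ^ 2) * n := by gcongr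
    _ = (n * γ) ^ 2 * (q ^ 2 * c ^ 2 * ε ^ 2 / 8) := by ring
    _ ≤ B ^ 2 * (q ^ 2 * c ^ 2 * ε ^ 2 / 8) := by gcongr
    _ = 2 * (B * q / 4 * c * ε) ^ 2 := by ring

theorem stmt_15_general {Ω : Type*} [MeasurableSpace Ω] (μ : Measure Ω) [IsProbabilityMeasure μ]
    (n : ℕ) (hn : 0 < n) (q1 c γ lam eps' Bt : ℝ)
    (hq1 : q1 ∈ Set.Ioo (0:ℝ) 1) (hc : c ∈ Set.Ioo (0:ℝ) 1) (hγ : γ ∈ Set.Ioo (0:ℝ) 1)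
    (heps : 2 * lam ^ 2 ≤ eps')
    (hBt : (n : ℝ) * γ ≤ Bt)
    (hlog : Real.log n ≤ n * eps' ^ 2)
    {ι : Type*} [Fintype ι] (hcard : Fintype.card ι ≤ n)
    (Y : ι → Ω → ℝ) (a : ι → ℝ) (hmeas : ∀ l, Measurable (Y l))
    (hindep : iIndepFun Y μ)
    (hbdd : ∀ l, ∀ ω, Y l ω ∈ Set.Icc (a l) (a l + 1))
    (hdrift : Bt * q1 / 2 * c * eps' ≤ ∫ ω, (∑ l, Y l ω) ∂μ) :
    (μ {ω | (∑ l, Y l ω) ≤ Bt * q1 / 4 * c * eps'}).toReal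
      ≤ 2 / (n : ℝ) ^ (γ ^ 2 * q1 ^ 2 * c ^ 2 / 8) := by
  have hn0 : (0 : ℝ) < n := Nat.cast_pos.2 hn
  have hBt0 : 0 ≤ Bt := (mul_nonneg hn0.le hγ.1.le).trans hBt
  have heps0 : 0 ≤ eps' := (by positivity : (0 : ℝ) ≤ 2 * lam ^ 2).trans heps
  set η := Bt * q1 / 4 * c * eps'
  have hη0 : 0 ≤ η := by have := hq1.1; have := hc.1; positivity
  have hsubset :
      {ω | ∑ l, Y l ω ≤ η} ⊆ {ω | ∑ l, Y l ω ≤ μ[fun ω ↦ ∑ l, Y l ω] - η} :=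
    fun ω (hω : _ ≤ η) ↦ show _ ≤ _ - η by
      linarith [show Bt * q1 / 2 * c * eps' = 2 * η by ring]
  have htail := measureReal_sum_le_integral_sub_le (fun l ↦ (hmeas l).aemeasurable) hindep
    (fun l ↦ ae_of_all _ (hbdd l)) hcard hη0
  calc (μ {ω | ∑ l, Y l ω ≤ η}).toReal
      ≤ exp (-2 * η ^ 2 / n) := (measureReal_mono hsubset).trans htail
    _ ≤ exp (-(γ ^ 2 * q1 ^ 2 * c ^ 2 / 8 * log n)) := by
        rw [neg_mul, neg_div]
        gcongr
        exact mul_log_le_hoeffding_exponent hn0 hγ.1.le hBt hlog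
    _ = ((n : ℝ) ^ (γ ^ 2 * q1 ^ 2 * c ^ 2 / 8))⁻¹ := by
        rw [rpow_def_of_pos hn0, exp_neg, mul_comm]
    _ ≤ 2 / (n : ℝ) ^ (γ ^ 2 * q1 ^ 2 * c ^ 2 / 8) := by
        rw [inv_eq_one_div]; gcongr; norm_num

/-- Concentration of the drift in the biased 2-choices rule: conditionally on
the shifted imbalance being `ε' ≥ 2λ_n²`, with `B_t ≥ nγ` and `n·ε'² ≥ log n`,
if `E[Δ(t)] ≥ (B_t·q1/2)·c·ε'` and `Δ(t)` is a sum of at most `n` independent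
random variables each ranging over an interval of length 1, then
`P(Δ(t) ≤ (B_t·q1/4)·c·ε') ≤ 2/n^α`, where `α = γ²q1²c²/8`. -/
theorem stmt_15 {Ω : Type*} [MeasurableSpace Ω] (μ : Measure Ω) [IsProbabilityMeasure μ]
    (n : ℕ) (hn : 0 < n) (q1 c γ lam eps' Bt : ℝ)
    (hq1 : q1 ∈ Set.Ioo (0:ℝ) 1) (hc : c ∈ Set.Ioo (0:ℝ) 1) (hγ : γ ∈ Set.Ioo (0:ℝ) 1)
    (heps : 2 * lam ^ 2 ≤ eps')
    (hBt : (n : ℝ) * γ ≤ Bt) (hBtn : Bt ≤ n)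
    (hlog : Real.log n ≤ n * eps' ^ 2)
    {ι : Type*} [Fintype ι] (hcard : Fintype.card ι ≤ n)
    (Y : ι → Ω → ℝ) (a : ι → ℝ) (hmeas : ∀ l, Measurable (Y l))
    (hindep : iIndepFun Y μ)
    (hbdd : ∀ l, ∀ ω, Y l ω ∈ Set.Icc (a l) (a l + 1))
    (hdrift : Bt * q1 / 2 * c * eps' ≤ ∫ ω, (∑ l, Y l ω) ∂μ) :
    (μ {ω | (∑ l, Y l ω) ≤ Bt * q1 / 4 * c * eps'}).toReal
      ≤ 2 / (n : ℝ) ^ (γ ^ 2 * q1 ^ 2 * c ^ 2 / 8) :=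
  stmt_15_general μ n hn q1 c γ lam eps' Bt hq1 hc hγ heps hBt hlog hcard Y a hmeas hindep hbdd
    hdrift
end
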